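/- Let D be a PVMD, P a potent maximal t-ideal of D, J a P-ideal (a v-ideal of finite type contained only in the maximal t-ideal P), and Q a prime ideal of D contained in P with J ⊄ Q. Then Q ⊆ ⋂_{n≥1}(J^n)_v. -/

import Mathlib

open scoped nonZeroDivisors

variable (D : Type*) [CommRing D] [IsDomain D]
variable (K : Type*) [Field K] [Algebra D K] [IsFractionRing D K]

/-- The `v`-operation: `I_v = (I⁻¹)⁻¹`, viewed as a `D`-submodule of `K`. -/
noncomputable def vSub (I : FractionalIdeal D⁰ K) : Submodule D K :=
  (((I⁻¹)⁻¹ : FractionalIdeal D⁰ K) : Submodule D K)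

/-- The `t`-operation: `I_t = ⋃ {J_v : J ⊆ I nonzero finitely generated}`. -/
noncomputable def tSub (I : FractionalIdeal D⁰ K) : Submodule D K :=
  ⨆ J : {J : FractionalIdeal D⁰ K // J ≠ 0 ∧ (J : Submodule D K).FG ∧ J ≤ I}, vSub D K J.1

/-- A fractional ideal `I` is `t`-invertible if `(I * I⁻¹)_t = D`. -/
noncomputable def IsTInvertible (I : FractionalIdeal D⁰ K) : Prop :=
  tSub D K (I * I⁻¹) = ((1 : FractionalIdeal D⁰ K) : Submodule D K)

/-- An integral ideal `I` of `D` is a `t`-ideal if `I_t = I`. -/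
noncomputable def IsTIdeal (I : Ideal D) : Prop :=
  tSub D K (I : FractionalIdeal D⁰ K) = ((I : FractionalIdeal D⁰ K) : Submodule D K)

/-- `D` is a PVMD: every nonzero finitely generated integral ideal is `t`-invertible. -/
noncomputable def IsPVMD : Prop :=
  ∀ I : Ideal D, I ≠ ⊥ → I.FG → IsTInvertible D K (I : FractionalIdeal D⁰ K)

/-- `P` is a maximal `t`-ideal: a proper integral `t`-ideal maximal among such. -/
noncomputable def IsMaximalTIdeal (P : Ideal D) : Prop :=
  IsTIdeal D K P ∧ P ≠ ⊤ ∧ ∀ Q : Ideal D, IsTIdeal D K Q → Q ≠ ⊤ → P ≤ Q → P = Q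

/-- `I` is a rigid ideal contained in the maximal `t`-ideal `P` (a `P`-ideal):
a `v`-ideal of finite type contained in `P` and in no other maximal `t`-ideal. -/
noncomputable def IsPIdeal (P I : Ideal D) : Prop :=
  (∃ A : Ideal D, A ≠ ⊥ ∧ A.FG ∧
      ((I : FractionalIdeal D⁰ K) : Submodule D K) = vSub D K (A : FractionalIdeal D⁰ K)) ∧
    I ≤ P ∧ ∀ Q : Ideal D, IsMaximalTIdeal D K Q → I ≤ Q → Q = P


/-- `P` is potent: it contains a nonzero finitely generated ideal contained in no
other maximal `t`-ideal. -/
noncomputable def IsPotent (P : Ideal D) : Prop :=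
  ∃ A : Ideal D, A ≠ ⊥ ∧ A.FG ∧ A ≤ P ∧
    ∀ Q : Ideal D, IsMaximalTIdeal D K Q → A ≤ Q → Q = P


/-!
Fix `q ∈ Q`, `n ≥ 1` and `y ∈ (J^n)⁻¹`; we show `qy ∈ D`. Pick `j ∈ J \ Q`. As `D_P` is a
valuation domain, there is `s ∉ P` with `j^n ∣ sq` or `q ∣ sj^n`; the latter is impossible since
`Q` is prime, so `s·qy ∈ D`. The conductor `(D :_D qy)` is a `t`-ideal containing `J^n` and `s`.
A maximal `t`-ideal containing it would be prime, hence contain `J`, hence equal `P`, which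
misses `s`; so the conductor is `D`, i.e. `qy ∈ D`.
-/

variable {D K}

open FractionalIdeal

namespace FractionalIdeal

theorem inv_ne_zero_of_ne_zero {I : FractionalIdeal D⁰ K} (hI : I ≠ 0) : I⁻¹ ≠ 0 := fun h =>
  (bot_lt_mul_inv hI).ne' (by rw [h, mul_zero]; rfl)

theorem le_inv_inv (I : FractionalIdeal D⁰ K) : I ≤ I⁻¹⁻¹ := by
  rcases eq_or_ne I 0 with rfl | hI
  · exact zero_le _
  · exact (le_div_iff_mul_le (inv_ne_zero_of_ne_zero hI)).mpr mul_one_div_le_one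

theorem algebraMap_mem_coeIdeal_iff {R L : Type*} [CommRing R] [CommRing L] [Algebra R L]
    [IsFractionRing R L] {I : Ideal R} {r : R} :
    algebraMap R L r ∈ (I : FractionalIdeal R⁰ L) ↔ r ∈ I := by
  refine ⟨?_, mem_coeIdeal_of_mem R⁰⟩
  rintro ⟨r', hr', he⟩
  exact IsFractionRing.injective R L he ▸ hr'

theorem algebraMap_mul_mem {R L : Type*} [CommRing R] [CommRing L] [Algebra R L]
    {S : Submonoid R} {I : FractionalIdeal S L} (r : R) {x : L} (hx : x ∈ I) :
    algebraMap R L r * x ∈ I :=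
  Algebra.smul_def r x ▸ Submodule.smul_mem (I : Submodule R L) r hx

end FractionalIdeal

section VOperation

variable {G I : FractionalIdeal D⁰ K}

theorem le_vSub (I : FractionalIdeal D⁰ K) : (I : Submodule D K) ≤ vSub D K I :=
  coe_le_coe.mpr (le_inv_inv I)

theorem vSub_mono (h : G ≤ I) : vSub D K G ≤ vSub D K I := by
  rcases eq_or_ne G 0 with rfl | hG
  · simp [vSub, inv_zero']
  · have hI : I ≠ 0 := ne_bot_of_le_ne_bot hG h
    exact coe_le_coe.mpr <| inv_anti_mono (inv_ne_zero_of_ne_zero hI)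
      (inv_ne_zero_of_ne_zero hG) (inv_anti_mono hG hI h)

theorem vSub_le_one (h : I ≤ 1) : vSub D K I ≤ ((1 : FractionalIdeal D⁰ K) : Submodule D K) :=
  (vSub_mono h).trans_eq (by simp [vSub])

theorem mem_vSub_iff (hI : I ≠ 0) {x : K} :
    x ∈ vSub D K I ↔ ∀ y ∈ I⁻¹, x * y ∈ (1 : FractionalIdeal D⁰ K) :=
  mem_inv_iff (inv_ne_zero_of_ne_zero hI)

theorem mul_mem_vSub_spanSingleton_mul {x u : K} (hu : u ∈ vSub D K I) :
    x * u ∈ vSub D K (spanSingleton D⁰ x * I) := by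
  rcases eq_or_ne I 0 with rfl | hI
  · simp_all [vSub, inv_zero']
  rcases eq_or_ne x 0 with rfl | hx
  · simp
  have hxI : spanSingleton D⁰ x * I ≠ 0 := by
    obtain ⟨v, hv, hv0⟩ : ∃ v ∈ I, v ≠ 0 := by simpa using eq_zero_iff.not.mp hI
    exact fun h => mul_ne_zero hx hv0 <|
      eq_zero_iff.mp h _ (mul_mem_mul (mem_spanSingleton_self _ x) hv)
  rw [mem_vSub_iff hxI]
  intro y hy
  have hxy : x * y ∈ I⁻¹ := by
    rw [mem_inv_iff hI]
    intro g hg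
    rw [mul_comm x, mul_assoc]
    exact (mem_inv_iff hxI).mp hy _ (mul_mem_mul (mem_spanSingleton_self _ x) hg)
  rw [mul_comm x, mul_assoc]
  exact (mem_vSub_iff hI).mp hu _ hxy

end VOperation

section TOperation

variable {G I J : FractionalIdeal D⁰ K}

theorem vSub_le_tSub (hfg : (G : Submodule D K).FG) (h : G ≤ I) : vSub D K G ≤ tSub D K I := by
  rcases eq_or_ne G 0 with rfl | hG
  · simp [vSub, inv_zero']
  · exact le_iSup (fun J : {J : FractionalIdeal D⁰ K // J ≠ 0 ∧ (J : Submodule D K).FG ∧ J ≤ I} =>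
      vSub D K J.1) ⟨G, hG, hfg, h⟩

theorem tSub_le_iff {X : Submodule D K} :
    tSub D K I ≤ X ↔ ∀ G : FractionalIdeal D⁰ K, (G : Submodule D K).FG → G ≤ I →
      vSub D K G ≤ X := by
  refine ⟨fun h G hfg hGI => (vSub_le_tSub hfg hGI).trans h, fun h => ?_⟩
  exact iSup_le fun G => h G.1 G.2.2.1 G.2.2.2

theorem tSub_mono (h : I ≤ J) : tSub D K I ≤ tSub D K J :=
  tSub_le_iff.mpr fun _ hfg hGI => vSub_le_tSub hfg (hGI.trans h)

theorem le_tSub (I : FractionalIdeal D⁰ K) : (I : Submodule D K) ≤ tSub D K I := fun x hx =>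
  vSub_le_tSub (by rw [coe_spanSingleton]; exact Submodule.fg_span_singleton x)
    (spanSingleton_le_iff_mem.mpr hx) (le_vSub _ (mem_spanSingleton_self _ x))

end TOperation

theorem IsTIdeal.of_tSub_le {M : Ideal D}
    (h : tSub D K M ≤ ((M : FractionalIdeal D⁰ K) : Submodule D K)) : IsTIdeal D K M :=
  h.antisymm (le_tSub _)

theorem isTIdeal_top : IsTIdeal D K ⊤ :=
  .of_tSub_le <| tSub_le_iff.mpr fun G _ hG => by
    rw [coeIdeal_top] at hG ⊢
    exact vSub_le_one hG

theorem IsTIdeal.colon {M : Ideal D} (hM : IsTIdeal D K M) (x : K) :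
    IsTIdeal D K (((M : FractionalIdeal D⁰ K) : Submodule D K).colon {x}) := by
  refine .of_tSub_le <| tSub_le_iff.mpr fun G hfg hGC u hu => ?_
  obtain ⟨d, rfl⟩ := (mem_one_iff _).mp (vSub_le_one (hGC.trans coeIdeal_le_one) hu)
  refine mem_coeIdeal_of_mem _ (Submodule.mem_colon_singleton.mpr ?_)
  have hxG : spanSingleton D⁰ x * G ≤ M := spanSingleton_mul_le_iff.mpr fun g hg => by
    obtain ⟨c, hc, rfl⟩ := (mem_coeIdeal _).mp (hGC hg)
    rw [mul_comm, ← Algebra.smul_def]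
    exact Submodule.mem_colon_singleton.mp hc
  have hfg' : ((spanSingleton D⁰ x * G : FractionalIdeal D⁰ K) : Submodule D K).FG := by
    rw [coe_mul, coe_spanSingleton]
    exact (Submodule.fg_span_singleton x).mul hfg
  rw [Algebra.smul_def, mul_comm, ← hM]
  exact vSub_le_tSub hfg' hxG (mul_mem_vSub_spanSingleton_mul hu)

theorem isTIdeal_sSup_of_directedOn {c : Set (Ideal D)} (hne : c.Nonempty)
    (hdir : DirectedOn (· ≤ ·) c)
    (ht : ∀ M ∈ c, IsTIdeal D K M) : IsTIdeal D K (sSup c) := by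
  refine .of_tSub_le <| tSub_le_iff.mpr fun G hfg hGc => ?_
  have hsup : ((sSup c : Ideal D) : FractionalIdeal D⁰ K) =
      sSup ((fun M : Ideal D => ((M : FractionalIdeal D⁰ K) : Submodule D K)) '' c) :=
    (Submodule.gc_map_comap _).l_sSup.trans sSup_image.symm
  obtain ⟨_, ⟨M, hMc, rfl⟩, hGM⟩ :=
    (CompleteLattice.isCompactElement_iff_le_of_directed_sSup_le _ _).mp
      ((Submodule.fg_iff_compact _).mp hfg) _ (hne.image _)
      (hdir.mono_comp fun _ _ h => coe_le_coe.mpr ((coeIdeal_le_coeIdeal K).mpr h))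
      (hsup ▸ coe_le_coe.mpr hGc)
  calc vSub D K G ≤ tSub D K M := vSub_le_tSub hfg hGM
    _ = ((M : FractionalIdeal D⁰ K) : Submodule D K) := ht M hMc
    _ ≤ ((sSup c : Ideal D) : FractionalIdeal D⁰ K) :=
      coe_le_coe.mpr ((coeIdeal_le_coeIdeal K).mpr (le_sSup hMc))

theorem IsTIdeal.exists_le_isMaximalTIdeal {E : Ideal D} (hE : IsTIdeal D K E) (hE' : E ≠ ⊤) :
    ∃ M, E ≤ M ∧ IsMaximalTIdeal D K M := by
  obtain ⟨M, hEM, hM⟩ := zorn_le_nonempty₀ {I : Ideal D | IsTIdeal D K I ∧ I ≠ ⊤}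
    (fun c hcs hchain y hy => by
      refine ⟨sSup c, ⟨isTIdeal_sSup_of_directedOn ⟨y, hy⟩ hchain.directedOn
        fun I hI => (hcs hI).1, ?_⟩, fun _ => le_sSup⟩
      rw [Ne, Ideal.eq_top_iff_one, Submodule.mem_sSup_of_directed ⟨y, hy⟩ hchain.directedOn]
      rintro ⟨I, hI, h1⟩
      exact (hcs hI).2 ((Ideal.eq_top_iff_one I).mpr h1))
    E ⟨hE, hE'⟩
  exact ⟨M, hEM, hM.1.1, hM.1.2, fun Q hQ hQ' hMQ => hMQ.antisymm (hM.2 ⟨hQ, hQ'⟩ hMQ)⟩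

theorem IsMaximalTIdeal.isPrime {M : Ideal D} (hM : IsMaximalTIdeal D K M) : M.IsPrime := by
  refine ⟨hM.2.1, fun {a b} hab => or_iff_not_imp_right.mpr fun hb => ?_⟩
  set C := ((M : FractionalIdeal D⁰ K) : Submodule D K).colon {algebraMap D K b}
  have hmem (d : D) : d ∈ C ↔ d * b ∈ M := by
    rw [Submodule.mem_colon_singleton, Algebra.smul_def, ← map_mul]
    exact algebraMap_mem_coeIdeal_iff
  have hC : C ≠ ⊤ := fun h => hb (by simpa using (hmem 1).mp (h ▸ Submodule.mem_top))
  rw [hM.2.2 C (hM.1.colon _) hC fun m hm => (hmem m).mpr (M.mul_mem_right b hm)]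
  exact (hmem a).mpr hab

theorem IsTInvertible.not_mul_inv_le {I : FractionalIdeal D⁰ K} (hI : IsTInvertible D K I)
    {P : Ideal D} (hP : IsTIdeal D K P) (hP' : P ≠ ⊤) : ¬ I * I⁻¹ ≤ P := fun h => hP' <| by
  have h1 : (1 : K) ∈ tSub D K (I * I⁻¹) := hI ▸ one_mem_one _
  rw [Ideal.eq_top_iff_one, ← algebraMap_mem_coeIdeal_iff (L := K), map_one]
  exact Eq.le hP (tSub_mono h h1)

theorem dvd_mul_of_mem_coeIdeal_inv {F : Ideal D} (hF : F ≠ ⊥) {g : K}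
    (hg : g ∈ (F : FractionalIdeal D⁰ K)⁻¹) {x z s : D} (hz : z ∈ F)
    (hs : algebraMap D K s = algebraMap D K x * g) : x ∣ s * z := by
  obtain ⟨c, hc⟩ := (mem_one_iff _).mp
    ((mem_inv_iff (coeIdeal_ne_zero.mpr hF)).mp hg _ (mem_coeIdeal_of_mem _ hz))
  exact ⟨c, IsFractionRing.injective D K (by rw [map_mul, map_mul, hs, hc]; ring)⟩

theorem IsPVMD.exists_notMem_dvd_mul_or_dvd_mul (hD : IsPVMD D K) {P : Ideal D}
    (hP : IsTIdeal D K P) (hP' : P ≠ ⊤) (x z : D) : ∃ s ∉ P, x ∣ s * z ∨ z ∣ s * x := by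
  rcases eq_or_ne x 0 with rfl | hx
  · exact ⟨1, fun h => hP' ((Ideal.eq_top_iff_one P).mpr h), Or.inr (by simp)⟩
  set F : Ideal D := Ideal.span {x, z}
  have hxF : x ∈ F := Ideal.subset_span (by simp)
  have hzF : z ∈ F := Ideal.subset_span (by simp)
  have hF0 : F ≠ ⊥ := fun h => hx (by simpa [h] using hxF)
  have hFfg : F.FG := Submodule.fg_span (Set.toFinite _)
  obtain ⟨u, huF, huP⟩ := SetLike.not_le_iff_exists.mp ((hD F hF0 hFfg).not_mul_inv_le hP hP')
  have hFsum : (F : FractionalIdeal D⁰ K) =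
      spanSingleton D⁰ (algebraMap D K x) + spanSingleton D⁰ (algebraMap D K z) := by
    rw [show F = Ideal.span (insert x {z}) from rfl, Ideal.span_insert, coeIdeal_sup,
      coeIdeal_span_singleton, coeIdeal_span_singleton]
  nth_rewrite 1 [hFsum] at huF
  rw [add_mul] at huF
  obtain ⟨_, hv, _, hw, rfl⟩ := (mem_add _ _ _).mp huF
  obtain ⟨g, hg, rfl⟩ := mem_singleton_mul.mp hv
  obtain ⟨g', hg', rfl⟩ := mem_singleton_mul.mp hw
  have hFI0 : (F : FractionalIdeal D⁰ K) ≠ 0 := coeIdeal_ne_zero.mpr hF0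
  obtain ⟨a, ha⟩ := (mem_one_iff _).mp ((mem_inv_iff hFI0).mp hg _ (mem_coeIdeal_of_mem _ hxF))
  obtain ⟨b, hb⟩ := (mem_one_iff _).mp ((mem_inv_iff hFI0).mp hg' _ (mem_coeIdeal_of_mem _ hzF))
  have hab : a + b ∉ P := fun h => huP <| by
    rw [mul_comm _ g, mul_comm _ g', ← ha, ← hb, ← map_add]
    exact mem_coeIdeal_of_mem _ h
  by_cases haP : a ∈ P
  · exact ⟨b, fun hbP => hab (P.add_mem haP hbP),
      Or.inr (dvd_mul_of_mem_coeIdeal_inv hF0 hg' hxF (by rw [hb, mul_comm]))⟩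
  · exact ⟨a, haP, Or.inl (dvd_mul_of_mem_coeIdeal_inv hF0 hg hzF (by rw [ha, mul_comm]))⟩

theorem IsPIdeal.eq_top_of_pow_le {P J E : Ideal D} (hJ : IsPIdeal D K P J)
    (hE : IsTIdeal D K E) {n : ℕ} (hJE : J ^ n ≤ E) (hEP : ¬ E ≤ P) : E = ⊤ := by
  by_contra hE'
  obtain ⟨M, hEM, hM⟩ := hE.exists_le_isMaximalTIdeal hE'
  exact hEP (hJ.2.2 M hM (Ideal.IsPrime.le_of_pow_le (hP := hM.isPrime) (hJE.trans hEM)) ▸ hEM)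

theorem IsPIdeal.mem_one_of_pow_mul_mem_one {P J : Ideal D} (hJ : IsPIdeal D K P J) {n : ℕ}
    {x : K} (hJx : ∀ d ∈ J ^ n, algebraMap D K d * x ∈ (1 : FractionalIdeal D⁰ K)) {s : D}
    (hsP : s ∉ P) (hsx : algebraMap D K s * x ∈ (1 : FractionalIdeal D⁰ K)) :
    x ∈ (1 : FractionalIdeal D⁰ K) := by
  set E := (((⊤ : Ideal D) : FractionalIdeal D⁰ K) : Submodule D K).colon {x}
  have hmem (d : D) : d ∈ E ↔ algebraMap D K d * x ∈ (1 : FractionalIdeal D⁰ K) := by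
    rw [Submodule.mem_colon_singleton, coeIdeal_top, Algebra.smul_def, mem_coe]
  have hE : E = ⊤ := hJ.eq_top_of_pow_le (isTIdeal_top.colon x)
    (fun d hd => (hmem d).mpr (hJx d hd)) fun h => hsP (h ((hmem s).mpr hsx))
  simpa using (hmem 1).mp (hE ▸ Submodule.mem_top)

theorem stmt_13_general (hD : IsPVMD D K) (P : Ideal D) (hP : IsMaximalTIdeal D K P)
    (J : Ideal D) (hJ : IsPIdeal D K P J)
    (Q : Ideal D) (hQ : Q.IsPrime) (hQP : Q ≤ P) (hJQ : ¬ J ≤ Q) :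
    ((Q : FractionalIdeal D⁰ K) : Submodule D K) ≤
      ⨅ (n : ℕ) (_ : 1 ≤ n), vSub D K ((J : FractionalIdeal D⁰ K) ^ n) := by
  obtain ⟨j, hjJ, hjQ⟩ := SetLike.not_le_iff_exists.mp hJQ
  refine le_iInf₂ fun n _ x hx => ?_
  obtain ⟨q, hqQ, rfl⟩ := (mem_coeIdeal D⁰).mp hx
  have hjn : j ^ n ≠ 0 := pow_ne_zero n fun h => hjQ (h ▸ Q.zero_mem)
  have hJn : (J : FractionalIdeal D⁰ K) ^ n ≠ 0 := by
    rw [← coeIdeal_pow, Ne, coeIdeal_eq_zero]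
    exact fun h => hjn (by simpa [h] using Ideal.pow_mem_pow hjJ n)
  rw [mem_vSub_iff hJn]
  intro y hy
  have hJy (d : D) (hd : d ∈ J ^ n) : algebraMap D K d * y ∈ (1 : FractionalIdeal D⁰ K) :=
    mul_comm y _ ▸ (mem_inv_iff hJn).mp hy _
      (coeIdeal_pow D⁰ (P := K) J n ▸ mem_coeIdeal_of_mem _ hd)
  obtain ⟨s, hsP, hdvd⟩ := hD.exists_notMem_dvd_mul_or_dvd_mul hP.1 hP.2.1 (j ^ n) q
  obtain ⟨c, hc⟩ : j ^ n ∣ s * q := hdvd.resolve_right fun h =>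
    (hQ.mem_or_mem (Ideal.mem_of_dvd _ h hqQ)).elim (fun hs => hsP (hQP hs))
      fun hj => hjQ (hQ.mem_of_pow_mem n hj)
  refine hJ.mem_one_of_pow_mul_mem_one (n := n) (fun d hd => ?_) hsP ?_
  · rw [mul_left_comm]
    exact algebraMap_mul_mem q (hJy d hd)
  · rw [← mul_assoc, ← map_mul, hc, map_mul, mul_comm (algebraMap D K _), mul_assoc]
    exact algebraMap_mul_mem c (hJy _ (Ideal.pow_mem_pow hjJ n))

/-- Let `D` be a PVMD, `P` a potent maximal `t`-ideal, `J` a `P`-ideal, and `Q` a prime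
ideal of `D` contained in `P` with `J ⊄ Q`. Then `Q ⊆ ⋂_{n ≥ 1} (J^n)_v`. -/
theorem stmt_13 (hD : IsPVMD D K) (P : Ideal D) (hP : IsMaximalTIdeal D K P)
    (hpot : IsPotent D K P) (J : Ideal D) (hJ : IsPIdeal D K P J)
    (Q : Ideal D) (hQ : Q.IsPrime) (hQP : Q ≤ P) (hJQ : ¬ J ≤ Q) :
    ((Q : FractionalIdeal D⁰ K) : Submodule D K) ≤
      ⨅ (n : ℕ) (_ : 1 ≤ n), vSub D K ((J : FractionalIdeal D⁰ K) ^ n) :=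
  stmt_13_general hD P hP J hJ Q hQ hQP hJQ
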